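/- Let (X,d) be a compact metric space and 𝕀 = {S_1,...,S_N} an IFS of bi-Lipschitz contractions on X. Then for every t ≥ 0 the limit P(t) = lim_{k→∞} (1/k) log ∑_{𝐢∈I^k} Lip⁺(S_𝐢)^t exists; moreover, the sequence (s_k), where s_k is the unique solution of ∑_{𝐢∈I^k} Lip⁺(S_𝐢)^{s_k} = 1, converges to the unique zero of P. -/

import Mathlib

open Metric Filter Set MeasureTheory Topology

/-- The upper Lipschitz constant `Lip⁺(S) = sup_{x ≠ y} d(S x, S y)/d(x,y)`. -/
noncomputable def LipPlus {X : Type*} [MetricSpace X] (S : X → X) : ℝ :=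
  sSup {r : ℝ | ∃ x y : X, x ≠ y ∧ r = dist (S x) (S y) / dist x y}

/-- The lower Lipschitz constant `Lip⁻(S) = inf_{x ≠ y} d(S x, S y)/d(x,y)`. -/
noncomputable def LipMinus {X : Type*} [MetricSpace X] (S : X → X) : ℝ :=
  sInf {r : ℝ | ∃ x y : X, x ≠ y ∧ r = dist (S x) (S y) / dist x y}

/-- `S` is a bi-Lipschitz contraction: `0 < Lip⁻(S) ≤ Lip⁺(S) < 1`,
with `Lip⁺(S)` and `Lip⁻(S)` genuine upper/lower Lipschitz bounds. -/
def IsBiLipContraction {X : Type*} [MetricSpace X] (S : X → X) : Prop :=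
  (∀ x y : X, dist (S x) (S y) ≤ LipPlus S * dist x y) ∧
  (∀ x y : X, LipMinus S * dist x y ≤ dist (S x) (S y)) ∧
  0 < LipMinus S ∧ LipMinus S ≤ LipPlus S ∧ LipPlus S < 1

/-- `S_𝐢 = S_{i₁} ∘ ⋯ ∘ S_{i_k}` for a finite word `𝐢` over `{1,…,N}`. -/
def compList {X : Type*} {N : ℕ} (S : Fin N → X → X) : List (Fin N) → X → X
  | [] => id
  | i :: w => S i ∘ compList S w

/-!
Write `Z_k(t) = ∑_{|w| = k} Lip⁺(S_w)^t` and `p_k(t) = (log Z_k(t)) / k`. Since `Lip⁺` is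
submultiplicative, `k ↦ log Z_k(t)` is subadditive for `t ≥ 0`, and Fekete's lemma gives the limit
`P(t)`. With `a` the largest `Lip⁺(S_i)` and `b` the smallest `Lip⁻(S_i)`, every `Lip⁺(S_w)` lies in
`[b^|w|, a^|w|]`, so every `p_k`, and hence `P`, has all its difference quotients in
`[log b, log a]` with `log a < 0`. Thus `P` is continuous and strictly decreasing from
`P(0) = log N ≥ 0`, so it has a unique zero `s₀`; and since `p_k(s_k) = 0`, the slope bound gives
`|s_k - s₀| ≤ |p_k(s₀)| / (-log a) → 0`.
-/

open Real

lemma mul_abs_sub_le_abs_sub_of_slope_le {g : ℝ → ℝ} {α : ℝ}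
    (hg : ∀ t u, t ≤ u → g u - g t ≤ (u - t) * α) (t u : ℝ) :
    |u - t| * -α ≤ |g u - g t| := by
  rcases le_total t u with h | h
  · rw [abs_of_nonneg (sub_nonneg.2 h)]
    linarith [hg t u h, neg_le_abs (g u - g t)]
  · rw [abs_of_nonpos (sub_nonpos.2 h)]
    linarith [hg u t h, le_abs_self (g u - g t)]

lemma tendsto_of_slope_le {f : ℕ → ℝ → ℝ} {x : ℕ → ℝ} {s α : ℝ} (hα : α < 0)
    (hf : ∀ᶠ k in atTop, ∀ t u, t ≤ u → f k u - f k t ≤ (u - t) * α)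
    (hx : ∀ᶠ k in atTop, f k (x k) = 0) (hs : Tendsto (fun k => f k s) atTop (𝓝 0)) :
    Tendsto x atTop (𝓝 s) := by
  have hbound : ∀ᶠ k in atTop, dist (x k) s ≤ |f k s| / -α := by
    filter_upwards [hf, hx] with k hfk hxk
    have h := mul_abs_sub_le_abs_sub_of_slope_le hfk s (x k)
    rwa [hxk, zero_sub, abs_neg, ← le_div_iff₀ (neg_pos.2 hα)] at h
  refine tendsto_iff_dist_tendsto_zero.2
    (squeeze_zero' (Eventually.of_forall fun _ => dist_nonneg) hbound ?_)
  simpa using hs.abs.div_const (-α)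

lemma exists_unique_zero_of_slope {P : ℝ → ℝ} {α β : ℝ} (hα : α < 0) (h0 : 0 ≤ P 0)
    (hslope : ∀ t u, 0 ≤ t → t ≤ u → (u - t) * β ≤ P u - P t ∧ P u - P t ≤ (u - t) * α) :
    ∃ s, 0 ≤ s ∧ P s = 0 ∧ ∀ t, 0 ≤ t → P t = 0 → t = s := by
  have hβ : β ≤ α := by
    simpa using (hslope 0 1 le_rfl zero_le_one).1.trans (hslope 0 1 le_rfl zero_le_one).2
  have hanti : StrictAntiOn P (Ici 0) := fun t ht u _ htu => by
    nlinarith [(hslope t u ht htu.le).2]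
  have hcont : ContinuousOn P (Ici 0) := by
    refine (LipschitzOnWith.of_le_add_mul' (-β) fun t ht u hu => ?_).continuousOn
    rcases le_total t u with h | h
    · rw [dist_comm, Real.dist_eq, abs_of_nonneg (sub_nonneg.2 h)]
      linarith [(hslope t u ht h).1]
    · nlinarith [(hslope u t hu h).2, dist_nonneg (x := t) (y := u)]
  set T := P 0 / -α
  have hT : 0 ≤ T := div_nonneg h0 (neg_nonneg.2 hα.le)
  have hPT : P T ≤ 0 := by
    have h := (hslope 0 T le_rfl hT).2
    rw [sub_zero, div_mul_eq_mul_div, div_neg, mul_div_cancel_right₀ _ hα.ne] at h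
    linarith
  obtain ⟨s, hs, hPs⟩ := intermediate_value_Icc' hT (hcont.mono Icc_subset_Ici_self) ⟨hPT, h0⟩
  exact ⟨s, hs.1, hPs, fun t ht hPt => hanti.injOn ht hs.1 (hPt.trans hPs.symm)⟩

section LipPlus

variable {X : Type*} [MetricSpace X] {f g : X → X} {C D c : ℝ}

lemma mem_upperBounds_dist_ratios (hf : ∀ x y, dist (f x) (f y) ≤ C * dist x y) :
    C ∈ upperBounds {r : ℝ | ∃ x y : X, x ≠ y ∧ r = dist (f x) (f y) / dist x y} := by
  rintro r ⟨x, y, hxy, rfl⟩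
  exact (div_le_iff₀ (dist_pos.2 hxy)).2 (hf x y)

lemma dist_le_lipPlus_mul (hf : ∀ x y, dist (f x) (f y) ≤ C * dist x y) (x y : X) :
    dist (f x) (f y) ≤ LipPlus f * dist x y := by
  rcases eq_or_ne x y with rfl | hxy
  · simp
  · exact (div_le_iff₀ (dist_pos.2 hxy)).1
      (le_csSup ⟨C, mem_upperBounds_dist_ratios hf⟩ ⟨x, y, hxy, rfl⟩)

lemma lipPlus_le [Nontrivial X] (hf : ∀ x y, dist (f x) (f y) ≤ C * dist x y) :
    LipPlus f ≤ C := by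
  obtain ⟨x, y, hxy⟩ := exists_pair_ne X
  exact csSup_le ⟨_, x, y, hxy, rfl⟩ (mem_upperBounds_dist_ratios hf)

lemma le_lipPlus [Nontrivial X] (hf : ∀ x y, dist (f x) (f y) ≤ C * dist x y)
    (hc : ∀ x y, c * dist x y ≤ dist (f x) (f y)) : c ≤ LipPlus f := by
  obtain ⟨x, y, hxy⟩ := exists_pair_ne X
  exact ((le_div_iff₀ (dist_pos.2 hxy)).2 (hc x y)).trans
    (le_csSup ⟨C, mem_upperBounds_dist_ratios hf⟩ ⟨x, y, hxy, rfl⟩)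

lemma lipPlus_nonneg [Nontrivial X] (hf : ∀ x y, dist (f x) (f y) ≤ C * dist x y) :
    0 ≤ LipPlus f :=
  le_lipPlus hf fun x y => by simp

lemma lipPlus_comp_le [Nontrivial X] (hf : ∀ x y, dist (f x) (f y) ≤ C * dist x y)
    (hg : ∀ x y, dist (g x) (g y) ≤ D * dist x y) : LipPlus (f ∘ g) ≤ LipPlus f * LipPlus g :=
  lipPlus_le fun x y => calc
    dist (f (g x)) (f (g y)) ≤ LipPlus f * dist (g x) (g y) := dist_le_lipPlus_mul hf _ _
    _ ≤ LipPlus f * (LipPlus g * dist x y) :=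
      mul_le_mul_of_nonneg_left (dist_le_lipPlus_mul hg x y) (lipPlus_nonneg hf)
    _ = LipPlus f * LipPlus g * dist x y := (mul_assoc _ _ _).symm

lemma nontrivial_of_lipMinus_pos (h : 0 < LipMinus f) : Nontrivial X := by
  by_contra hX
  have : Subsingleton X := not_nontrivial_iff_subsingleton.1 hX
  have hempty : {r : ℝ | ∃ x y : X, x ≠ y ∧ r = dist (f x) (f y) / dist x y} = ∅ :=
    eq_empty_of_forall_notMem fun _ ⟨x, y, hxy, _⟩ => hxy (Subsingleton.elim x y)
  rw [LipMinus, hempty, Real.sInf_empty] at h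
  exact h.false

end LipPlus

lemma compList_append {X : Type*} {N : ℕ} (S : Fin N → X → X) (w v : List (Fin N)) :
    compList S (w ++ v) = compList S w ∘ compList S v := by
  induction w with
  | nil => rfl
  | cons i w ih => rw [List.cons_append, compList, compList, ih]; rfl

section compList

variable {X : Type*} [MetricSpace X] {N : ℕ} {S : Fin N → X → X} {a b : ℝ}

lemma dist_compList_le (hS : ∀ i x y, dist (S i x) (S i y) ≤ a * dist x y) (ha : 0 ≤ a)
    (w : List (Fin N)) (x y : X) :
    dist (compList S w x) (compList S w y) ≤ a ^ w.length * dist x y := by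
  induction w with
  | nil => simp [compList]
  | cons i w ih => calc
      dist (S i (compList S w x)) (S i (compList S w y))
          ≤ a * dist (compList S w x) (compList S w y) := hS i _ _
      _ ≤ a * (a ^ w.length * dist x y) := mul_le_mul_of_nonneg_left ih ha
      _ = a ^ (i :: w).length * dist x y := by rw [List.length_cons, pow_succ']; ring

lemma pow_mul_dist_le_dist_compList (hS : ∀ i x y, b * dist x y ≤ dist (S i x) (S i y))
    (hb : 0 ≤ b) (w : List (Fin N)) (x y : X) :
    b ^ w.length * dist x y ≤ dist (compList S w x) (compList S w y) := by
  induction w with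
  | nil => simp [compList]
  | cons i w ih => calc
      b ^ (i :: w).length * dist x y = b * (b ^ w.length * dist x y) := by
        rw [List.length_cons, pow_succ']; ring
      _ ≤ b * dist (compList S w x) (compList S w y) := mul_le_mul_of_nonneg_left ih hb
      _ ≤ dist (S i (compList S w x)) (S i (compList S w y)) := hS i _ _

lemma IsBiLipContraction.dist_le_one_mul {T : X → X} (hT : IsBiLipContraction T) (x y : X) :
    dist (T x) (T y) ≤ 1 * dist x y :=
  (hT.1 x y).trans (mul_le_mul_of_nonneg_right hT.2.2.2.2.le dist_nonneg)

lemma lipPlus_compList_append_le [Nontrivial X] (hS : ∀ i, IsBiLipContraction (S i))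
    (w v : List (Fin N)) :
    LipPlus (compList S (w ++ v)) ≤ LipPlus (compList S w) * LipPlus (compList S v) := by
  have hS₁ : ∀ i x y, dist (S i x) (S i y) ≤ 1 * dist x y := fun i => (hS i).dist_le_one_mul
  rw [compList_append]
  exact lipPlus_comp_le (dist_compList_le hS₁ zero_le_one w) (dist_compList_le hS₁ zero_le_one v)

lemma exists_pow_le_lipPlus_compList_le_pow [Nonempty (Fin N)] [Nontrivial X]
    (hS : ∀ i, IsBiLipContraction (S i)) :
    ∃ a b : ℝ, 0 < b ∧ a < 1 ∧
      ∀ w, b ^ w.length ≤ LipPlus (compList S w) ∧ LipPlus (compList S w) ≤ a ^ w.length := by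
  obtain ⟨i₀, hi₀⟩ := Finite.exists_max fun i => LipPlus (S i)
  obtain ⟨j₀, hj₀⟩ := Finite.exists_min fun i => LipMinus (S i)
  have hb : 0 < LipMinus (S j₀) := (hS j₀).2.2.1
  have ha : 0 ≤ LipPlus (S i₀) := hb.le.trans ((hj₀ i₀).trans (hS i₀).2.2.2.1)
  have hup : ∀ i x y, dist (S i x) (S i y) ≤ LipPlus (S i₀) * dist x y := fun i x y =>
    ((hS i).1 x y).trans (mul_le_mul_of_nonneg_right (hi₀ i) dist_nonneg)
  have hlow : ∀ i x y, LipMinus (S j₀) * dist x y ≤ dist (S i x) (S i y) := fun i x y =>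
    (mul_le_mul_of_nonneg_right (hj₀ i) dist_nonneg).trans ((hS i).2.1 x y)
  exact ⟨_, _, hb, (hS i₀).2.2.2.2, fun w =>
    ⟨le_lipPlus (dist_compList_le hup ha w) (pow_mul_dist_le_dist_compList hlow hb.le w),
      lipPlus_le (dist_compList_le hup ha w)⟩⟩

end compList

section Pressure

variable {ι : Type*} [Fintype ι] {φ : List ι → ℝ} {a b t u : ℝ} {k : ℕ}

noncomputable def partitionFn (φ : List ι → ℝ) (k : ℕ) (t : ℝ) : ℝ :=
  ∑ w : Fin k → ι, φ (List.ofFn w) ^ t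

lemma partitionFn_pos [Nonempty ι] (hφ : ∀ w, 0 < φ w) (k : ℕ) (t : ℝ) :
    0 < partitionFn φ k t :=
  Finset.sum_pos (fun _ _ => rpow_pos_of_pos (hφ _) t) Finset.univ_nonempty

lemma partitionFn_eq_zero [IsEmpty ι] (hk : k ≠ 0) (t : ℝ) : partitionFn φ k t = 0 := by
  have : Nonempty (Fin k) := Fin.pos_iff_nonempty.1 (Nat.pos_of_ne_zero hk)
  simp [partitionFn]

lemma log_partitionFn_zero_div_nonneg [Nonempty ι] (k : ℕ) :
    0 ≤ log (partitionFn φ k 0) / k := by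
  have : partitionFn φ k 0 = (Fintype.card ι : ℝ) ^ k := by simp [partitionFn]
  rw [this]
  exact div_nonneg (log_nonneg (one_le_pow₀ (by exact_mod_cast Fintype.card_pos))) k.cast_nonneg

lemma partitionFn_add_le (hφ : ∀ w, 0 ≤ φ w) (hmul : ∀ w v, φ (w ++ v) ≤ φ w * φ v)
    (ht : 0 ≤ t) (m n : ℕ) :
    partitionFn φ (m + n) t ≤ partitionFn φ m t * partitionFn φ n t := calc
  partitionFn φ (m + n) t
      = ∑ p : (Fin m → ι) × (Fin n → ι), φ (List.ofFn (Fin.append p.1 p.2)) ^ t :=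
    (Equiv.sum_comp (Fin.appendEquiv m n) _).symm
  _ ≤ ∑ p : (Fin m → ι) × (Fin n → ι), φ (List.ofFn p.1) ^ t * φ (List.ofFn p.2) ^ t := by
    gcongr with p
    rw [List.ofFn_fin_append, ← mul_rpow (hφ _) (hφ _)]
    exact rpow_le_rpow (hφ _) (hmul _ _) ht
  _ = partitionFn φ m t * partitionFn φ n t := by
    rw [Fintype.sum_prod_type, partitionFn, partitionFn, Fintype.sum_mul_sum]

lemma partitionFn_le_mul_rpow (hφ : ∀ w, 0 < φ w ∧ φ w ≤ a ^ w.length) (htu : t ≤ u) (k : ℕ) :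
    partitionFn φ k u ≤ partitionFn φ k t * (a ^ k) ^ (u - t) := by
  rw [partitionFn, partitionFn, Finset.sum_mul]
  gcongr with w
  obtain ⟨hpos, hle⟩ := hφ (List.ofFn w)
  rw [List.length_ofFn] at hle
  rw [← add_sub_cancel t u, rpow_add hpos, add_sub_cancel_left]
  exact mul_le_mul_of_nonneg_left (rpow_le_rpow hpos.le hle (sub_nonneg.2 htu))
    (rpow_nonneg hpos.le t)

lemma mul_rpow_le_partitionFn (hb : 0 < b) (hφ : ∀ w, b ^ w.length ≤ φ w) (htu : t ≤ u)
    (k : ℕ) : partitionFn φ k t * (b ^ k) ^ (u - t) ≤ partitionFn φ k u := by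
  rw [partitionFn, partitionFn, Finset.sum_mul]
  gcongr with w
  have hle := hφ (List.ofFn w)
  rw [List.length_ofFn] at hle
  have hpos := (pow_pos hb k).trans_le hle
  rw [← add_sub_cancel t u, rpow_add hpos, add_sub_cancel_left]
  exact mul_le_mul_of_nonneg_left (rpow_le_rpow (pow_pos hb k).le hle (sub_nonneg.2 htu))
    (rpow_nonneg hpos.le t)

lemma log_partitionFn_div_sub_le [Nonempty ι] (ha : 0 < a)
    (hφ : ∀ w, 0 < φ w ∧ φ w ≤ a ^ w.length) (hk : k ≠ 0) (htu : t ≤ u) :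
    log (partitionFn φ k u) / k - log (partitionFn φ k t) / k ≤ (u - t) * log a := by
  have hZ := partitionFn_pos (fun w => (hφ w).1) k
  have hr := rpow_pos_of_pos (pow_pos ha k) (u - t)
  have h := log_le_log (hZ u) (partitionFn_le_mul_rpow hφ htu k)
  rw [log_mul (hZ t).ne' hr.ne', log_rpow (pow_pos ha k), log_pow] at h
  rw [div_sub_div_same, div_le_iff₀ (by positivity)]
  linarith

lemma le_log_partitionFn_div_sub [Nonempty ι] (hb : 0 < b) (hφ : ∀ w, b ^ w.length ≤ φ w)
    (hk : k ≠ 0) (htu : t ≤ u) :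
    (u - t) * log b ≤ log (partitionFn φ k u) / k - log (partitionFn φ k t) / k := by
  have hZ := partitionFn_pos (fun w => (pow_pos hb _).trans_le (hφ w)) k
  have hr := rpow_pos_of_pos (pow_pos hb k) (u - t)
  have h := log_le_log (mul_pos (hZ t) hr) (mul_rpow_le_partitionFn hb hφ htu k)
  rw [log_mul (hZ t).ne' hr.ne', log_rpow (pow_pos hb k), log_pow] at h
  rw [div_sub_div_same, le_div_iff₀ (by positivity)]
  linarith

noncomputable def pressure (φ : List ι → ℝ) (t : ℝ) : ℝ :=
  limUnder atTop fun k : ℕ => log (partitionFn φ k t) / k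

lemma tendsto_pressure [Nonempty ι] (hb : 0 < b) (hφ : ∀ w, b ^ w.length ≤ φ w)
    (hmul : ∀ w v, φ (w ++ v) ≤ φ w * φ v) (ht : 0 ≤ t) :
    Tendsto (fun k : ℕ => log (partitionFn φ k t) / k) atTop (𝓝 (pressure φ t)) := by
  have hpos : ∀ w, 0 < φ w := fun w => (pow_pos hb _).trans_le (hφ w)
  have hsub : Subadditive fun k => log (partitionFn φ k t) := fun m n => by
    rw [← log_mul (partitionFn_pos hpos _ _).ne' (partitionFn_pos hpos _ _).ne']
    exact log_le_log (partitionFn_pos hpos _ _)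
      (partitionFn_add_le (fun w => (hpos w).le) hmul ht m n)
  have hbdd : BddBelow (range fun k : ℕ => log (partitionFn φ k t) / k) := by
    refine ⟨min 0 (t * log b), ?_⟩
    rintro _ ⟨k, rfl⟩
    rcases eq_or_ne k 0 with rfl | hk
    · simp
    · have h0 := log_partitionFn_zero_div_nonneg (φ := φ) k
      have h := le_log_partitionFn_div_sub hb hφ hk ht
      exact (min_le_right _ _).trans (by linarith)
  exact tendsto_nhds_limUnder ⟨_, hsub.tendsto_lim hbdd⟩

theorem exists_pressure_of_isEmpty [IsEmpty ι] (φ : List ι → ℝ) :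
    ∃ P : ℝ → ℝ,
      (∀ t : ℝ, 0 ≤ t →
        Tendsto (fun k : ℕ => log (partitionFn φ k t) / k) atTop (𝓝 (P t))) ∧
      ∀ sk : ℕ → ℝ, (∀ k, 1 ≤ k → partitionFn φ k (sk k) = 1) →
        ∃ s0 : ℝ, 0 ≤ s0 ∧ P s0 = 0 ∧ (∀ t : ℝ, 0 ≤ t → P t = 0 → t = s0) ∧
          Tendsto sk atTop (𝓝 s0) := by
  refine ⟨0, fun t _ => tendsto_const_nhds.congr' ?_, fun sk hsk => ?_⟩
  · filter_upwards [eventually_ne_atTop 0] with k hk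
    simp [partitionFn_eq_zero hk]
  · simpa [partitionFn_eq_zero one_ne_zero] using hsk 1 le_rfl

theorem exists_pressure [Nonempty ι] (hb : 0 < b) (ha : a < 1)
    (hφ : ∀ w, b ^ w.length ≤ φ w ∧ φ w ≤ a ^ w.length) (hmul : ∀ w v, φ (w ++ v) ≤ φ w * φ v) :
    ∃ P : ℝ → ℝ,
      (∀ t : ℝ, 0 ≤ t →
        Tendsto (fun k : ℕ => log (partitionFn φ k t) / k) atTop (𝓝 (P t))) ∧
      ∀ sk : ℕ → ℝ, (∀ k, 1 ≤ k → partitionFn φ k (sk k) = 1) →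
        ∃ s0 : ℝ, 0 ≤ s0 ∧ P s0 = 0 ∧ (∀ t : ℝ, 0 ≤ t → P t = 0 → t = s0) ∧
          Tendsto sk atTop (𝓝 s0) := by
  have hφb : ∀ w, b ^ w.length ≤ φ w := fun w => (hφ w).1
  have hφa : ∀ w, 0 < φ w ∧ φ w ≤ a ^ w.length := fun w =>
    ⟨(pow_pos hb _).trans_le (hφ w).1, (hφ w).2⟩
  have ha0 : 0 < a := by
    obtain ⟨i⟩ := ‹Nonempty ι›
    simpa using (hφa [i]).1.trans_le (hφa [i]).2
  set p : ℕ → ℝ → ℝ := fun k t => log (partitionFn φ k t) / k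
  have hp : ∀ᶠ k in atTop, ∀ t u, t ≤ u →
      (u - t) * log b ≤ p k u - p k t ∧ p k u - p k t ≤ (u - t) * log a := by
    filter_upwards [eventually_ne_atTop 0] with k hk t u htu
    exact ⟨le_log_partitionFn_div_sub hb hφb hk htu, log_partitionFn_div_sub_le ha0 hφa hk htu⟩
  set P := pressure φ
  have hP : ∀ t, 0 ≤ t → Tendsto (p · t) atTop (𝓝 (P t)) := fun t ht =>
    tendsto_pressure hb hφb hmul ht
  have hPslope : ∀ t u, 0 ≤ t → t ≤ u →
      (u - t) * log b ≤ P u - P t ∧ P u - P t ≤ (u - t) * log a := fun t u ht htu =>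
    have hlim := (hP u (ht.trans htu)).sub (hP t ht)
    ⟨ge_of_tendsto hlim (hp.mono fun k hk => (hk t u htu).1),
      le_of_tendsto hlim (hp.mono fun k hk => (hk t u htu).2)⟩
  have hP0 : 0 ≤ P 0 := ge_of_tendsto' (hP 0 le_rfl) log_partitionFn_zero_div_nonneg
  refine ⟨P, hP, fun sk hsk => ?_⟩
  obtain ⟨s0, hs0, hPs0, huniq⟩ := exists_unique_zero_of_slope (log_neg ha0 ha) hP0 hPslope
  refine ⟨s0, hs0, hPs0, huniq, tendsto_of_slope_le (log_neg ha0 ha)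
    (hp.mono fun k hk t u htu => (hk t u htu).2) ?_ (hPs0 ▸ hP s0 hs0)⟩
  filter_upwards [eventually_ge_atTop 1] with k hk
  simp [p, hsk k hk]

end Pressure

theorem upper_lipschitz_dimension_exists_general
    {X : Type*} [MetricSpace X]
    {N : ℕ} (S : Fin N → X → X) (hS : ∀ i, IsBiLipContraction (S i)) :
    ∃ P : ℝ → ℝ,
      (∀ t : ℝ, 0 ≤ t → Filter.Tendsto
        (fun k : ℕ => Real.log (∑ w : Fin k → Fin N, LipPlus (compList S (List.ofFn w)) ^ t) / k)
        Filter.atTop (𝓝 (P t))) ∧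
      ∀ sk : ℕ → ℝ,
        (∀ k, 1 ≤ k → ∑ w : Fin k → Fin N, LipPlus (compList S (List.ofFn w)) ^ sk k = 1) →
        ∃ s0 : ℝ, 0 ≤ s0 ∧ P s0 = 0 ∧ (∀ t : ℝ, 0 ≤ t → P t = 0 → t = s0) ∧
          Filter.Tendsto sk Filter.atTop (𝓝 s0) := by
  rcases isEmpty_or_nonempty (Fin N) with hN | hN
  · exact exists_pressure_of_isEmpty fun w => LipPlus (compList S w)
  · have : Nontrivial X := nontrivial_of_lipMinus_pos (hS hN.some).2.2.1
    obtain ⟨a, b, hb, ha, hφ⟩ := exists_pow_le_lipPlus_compList_le_pow hS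
    exact exists_pressure (φ := fun w => LipPlus (compList S w)) hb ha hφ
      (lipPlus_compList_append_le hS)

/-- The pressure `P(t) = lim_k (1/k) log ∑_{𝐢 ∈ I^k} Lip⁺(S_𝐢)^t` exists for every `t ≥ 0`,
and the sequence `(s_k)` of solutions of `∑_{𝐢∈I^k} Lip⁺(S_𝐢)^{s_k} = 1` converges to the
unique zero of `P`, i.e. the upper Lipschitz dimension exists. -/
theorem upper_lipschitz_dimension_exists
    {X : Type*} [MetricSpace X] [CompactSpace X]
    {N : ℕ} (S : Fin N → X → X) (hS : ∀ i, IsBiLipContraction (S i)) :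
    ∃ P : ℝ → ℝ,
      (∀ t : ℝ, 0 ≤ t → Filter.Tendsto
        (fun k : ℕ => Real.log (∑ w : Fin k → Fin N, LipPlus (compList S (List.ofFn w)) ^ t) / k)
        Filter.atTop (𝓝 (P t))) ∧
      ∀ sk : ℕ → ℝ,
        (∀ k, 1 ≤ k → ∑ w : Fin k → Fin N, LipPlus (compList S (List.ofFn w)) ^ sk k = 1) →
        ∃ s0 : ℝ, 0 ≤ s0 ∧ P s0 = 0 ∧ (∀ t : ℝ, 0 ≤ t → P t = 0 → t = s0) ∧
          Filter.Tendsto sk Filter.atTop (𝓝 s0) :=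
  upper_lipschitz_dimension_exists_general S hS
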